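/- arXiv:math/0209262 — 2 statements merged into one kernel-verified Lean document; each statement's English description precedes it below -/
import Mathlib

section
/- Let U ⊆ ℝ^N be open, η^{ij} a constant symmetric invertible real N×N matrix with inverse η_{ij}, K₁ ∈ ℝ, b_{sk} constant real numbers with b_{sk} = −b_{ks}, Φ : U → ℝ smooth, and define H^i(u) = Σ_s η^{is} ( (∂Φ/∂u^s)(u) − (1/2) Σ_k b_{sk} u^k ). Then the functions H^i satisfy system (ass2) at every point of U if and only if Φ satisfies, at every point of U and for all indices i,j,k: Σ_{s,p} ( ∂²Φ/∂u^i∂u^s − (K₁/2) Σ_{r,l} η_{ir} η_{sl} u^r u^l ) η^{sp} (∂³Φ/∂u^p∂u^j∂u^k) = Σ_{s,p} ( ∂²Φ/∂u^j∂u^s − (K₁/2) Σ_{r,l} η_{jr} η_{sl} u^r u^l ) η^{sp} (∂³Φ/∂u^p∂u^i∂u^k). -/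
/-- Partial derivative `∂f/∂u^s` of a function on `ℝ^N`. -/
noncomputable def pd {N : ℕ} (s : Fin N) (f : (Fin N → ℝ) → ℝ) (u : Fin N → ℝ) : ℝ :=
  fderiv ℝ f u (Pi.single s 1)

/-- Second partial derivative `∂²f/∂u^s∂u^k`. -/
noncomputable def pd2 {N : ℕ} (s k : Fin N) (f : (Fin N → ℝ) → ℝ) (u : Fin N → ℝ) : ℝ :=
  pd k (pd s f) u

/-- System (ass2) at the point `u`. -/
noncomputable def Ass2 {N : ℕ} (η : Matrix (Fin N) (Fin N) ℝ) (K₁ : ℝ)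
    (H : Fin N → (Fin N → ℝ) → ℝ) (u : Fin N → ℝ) : Prop :=
  ∀ i j k, ∑ s, ∑ p,
      ((∑ r, η i r * pd r (H s) u) + (∑ r, η s r * pd r (H i) u) - K₁ * u i * u s)
        * η j p * pd2 p s (H k) u
    = ∑ s, ∑ p,
      ((∑ r, η j r * pd r (H s) u) + (∑ r, η s r * pd r (H j) u) - K₁ * u j * u s)
        * η i p * pd2 p s (H k) u


/-- Third partial derivative `∂³f/∂u^a∂u^b∂u^c`. -/
noncomputable def pd3 {N : ℕ} (a b c : Fin N) (f : (Fin N → ℝ) → ℝ)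
    (u : Fin N → ℝ) : ℝ :=
  pd c (pd b (pd a f)) u

open Filter Topology Matrix

variable {N : ℕ} {U : Set (Fin N → ℝ)}

lemma pd_congr {f g : (Fin N → ℝ) → ℝ} {u : Fin N → ℝ} (h : f =ᶠ[nhds u] g) (s : Fin N) :
    pd s f u = pd s g u := by
  unfold pd; rw [h.fderiv_eq]

lemma contDiffOn_pd (hU : IsOpen U) {f : (Fin N → ℝ) → ℝ}
    (hf : ContDiffOn ℝ (⊤ : ℕ∞) f U) (s : Fin N) : ContDiffOn ℝ (⊤ : ℕ∞) (pd s f) U := by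
  have h1 : ContDiffOn ℝ (⊤ : ℕ∞) (fun u => fderiv ℝ f u) U :=
    hf.fderiv_of_isOpen hU (by exact_mod_cast le_top)
  exact h1.clm_apply contDiffOn_const

lemma diffAt_pd (hU : IsOpen U) {f : (Fin N → ℝ) → ℝ}
    (hf : ContDiffOn ℝ (⊤ : ℕ∞) f U) (s : Fin N) {u : Fin N → ℝ} (hu : u ∈ U) :
    DifferentiableAt ℝ (pd s f) u :=
  ((contDiffOn_pd hU hf s).differentiableOn (by simp)).differentiableAt
    (hU.mem_nhds hu)

lemma pd2_symm (hU : IsOpen U) {f : (Fin N → ℝ) → ℝ}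
    (hf : ContDiffOn ℝ (⊤ : ℕ∞) f U) {u : Fin N → ℝ} (hu : u ∈ U) (a c : Fin N) :
    pd2 a c f u = pd2 c a f u := by
  have hdf : ContDiffOn ℝ (⊤ : ℕ∞) (fun v => fderiv ℝ f v) U :=
    hf.fderiv_of_isOpen hU (by exact_mod_cast le_top)
  have hdfa : DifferentiableAt ℝ (fun v => fderiv ℝ f v) u :=
    (hdf.differentiableOn (by simp)).differentiableAt (hU.mem_nhds hu)
  have key : ∀ w z : Fin N → ℝ,
      fderiv ℝ (fun v => fderiv ℝ f v w) u z = fderiv ℝ (fderiv ℝ f) u z w := by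
    intro w z
    rw [fderiv_clm_apply hdfa (differentiableAt_const w)]
    simp
  have hsymm : ∀ v w, fderiv ℝ (fderiv ℝ f) u v w = fderiv ℝ (fderiv ℝ f) u w v := by
    apply second_derivative_symmetric_of_eventually (f := f)
    · filter_upwards [hU.mem_nhds hu] with y hy
      exact ((hf.differentiableOn (by simp)).differentiableAt
        (hU.mem_nhds hy)).hasFDerivAt
    · exact hdfa.hasFDerivAt
  show pd c (pd a f) u = pd a (pd c f) u
  unfold pd
  rw [key, key, hsymm]

lemma pd_H_form {u : Fin N → ℝ} {g : Fin N → (Fin N → ℝ) → ℝ}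
    (hg : ∀ t, DifferentiableAt ℝ (g t) u) (c : Fin N → ℝ) (d : Fin N → Fin N → ℝ)
    (r : Fin N) :
    pd r (fun v => ∑ t, c t * (g t v - (1 / 2) * ∑ k, d t k * v k)) u
      = ∑ t, c t * (pd r (g t) u - (1 / 2) * d t r) := by
  have hlin : ∀ t, HasFDerivAt (fun v : Fin N → ℝ => ∑ k, d t k * v k)
      (∑ k, d t k • ContinuousLinearMap.proj (R := ℝ) (φ := fun _ : Fin N => ℝ) k) u := by
    intro t
    exact HasFDerivAt.fun_sum fun k _ =>
      ((ContinuousLinearMap.proj (R := ℝ) (φ := fun _ : Fin N => ℝ) k).hasFDerivAt).const_mul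
        (d t k)
  have hmain : HasFDerivAt (fun v => ∑ t, c t * (g t v - (1 / 2) * ∑ k, d t k * v k))
      (∑ t, c t • ((fderiv ℝ (g t) u) - (1 / 2 : ℝ) •
        ∑ k, d t k • ContinuousLinearMap.proj (R := ℝ) (φ := fun _ : Fin N => ℝ) k)) u := by
    exact HasFDerivAt.fun_sum fun t _ =>
      (((hg t).hasFDerivAt.sub ((hlin t).const_mul (1 / 2 : ℝ))).const_mul (c t))
  unfold pd
  rw [hmain.fderiv]
  simp only [ContinuousLinearMap.sum_apply, ContinuousLinearMap.smul_apply,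
    ContinuousLinearMap.sub_apply, ContinuousLinearMap.proj_apply, smul_eq_mul,
    Pi.single_apply]
  congr 1; funext t; congr 2
  simp [Finset.mul_sum, mul_ite]

lemma pd_sum_const_mul {u : Fin N → ℝ} {g : Fin N → (Fin N → ℝ) → ℝ}
    (hg : ∀ t, DifferentiableAt ℝ (g t) u) (c e : Fin N → ℝ) (r : Fin N) :
    pd r (fun v => ∑ t, c t * (g t v - e t)) u = ∑ t, c t * pd r (g t) u := by
  have hmain : HasFDerivAt (fun v => ∑ t, c t * (g t v - e t))
      (∑ t, c t • fderiv ℝ (g t) u) u := by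
    have := HasFDerivAt.fun_sum (fun t (_ : t ∈ Finset.univ) =>
      (((hg t).hasFDerivAt.sub (hasFDerivAt_const (e t) u)).const_mul (c t)))
    simpa using this
  unfold pd
  rw [hmain.fderiv]
  simp [pd]

section Main
variable (hU : IsOpen U) {Φ : (Fin N → ℝ) → ℝ} (hΦ : ContDiffOn ℝ (⊤ : ℕ∞) Φ U)
  {u : Fin N → ℝ} (hu : u ∈ U)

include hU hΦ hu

lemma pd3_swap23 (a c e : Fin N) : pd3 a c e Φ u = pd3 a e c Φ u :=
  pd2_symm hU (contDiffOn_pd hU hΦ a) hu c e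

lemma pd3_swap12 (a c e : Fin N) : pd3 a c e Φ u = pd3 c a e Φ u := by
  refine pd_congr ?_ e
  filter_upwards [hU.mem_nhds hu] with v hv
  exact pd2_symm hU hΦ hv a c

lemma pd3_swap13 (a c e : Fin N) : pd3 a c e Φ u = pd3 e c a Φ u := by
  rw [pd3_swap12 hU hΦ hu, pd3_swap23 hU hΦ hu, pd3_swap12 hU hΦ hu]

variable (η : Matrix (Fin N) (Fin N) ℝ) (b : Fin N → Fin N → ℝ)
  {H : Fin N → (Fin N → ℝ) → ℝ}
  (hHdef : ∀ i v, H i v = ∑ s, η i s * (pd s Φ v - (1 / 2) * ∑ k, b s k * v k))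

include hHdef

lemma pd_H (i r : Fin N) :
    pd r (H i) u = ∑ t, η i t * (pd2 t r Φ u - (1 / 2) * b t r) := by
  have : H i = fun v => ∑ s, η i s * (pd s Φ v - (1 / 2) * ∑ k, b s k * v k) :=
    funext (hHdef i)
  rw [this, pd_H_form (fun t => diffAt_pd hU hΦ t hu)]
  rfl

lemma pd2_H (k p s : Fin N) :
    pd2 p s (H k) u = ∑ t, η k t * pd3 t p s Φ u := by
  show pd s (pd p (H k)) u = _
  have h : pd p (H k) =ᶠ[nhds u] fun v => ∑ t, η k t * (pd2 t p Φ v - (1 / 2) * b t p) := by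
    filter_upwards [hU.mem_nhds hu] with v hv
    exact pd_H hU hΦ hv η b hHdef k p
  rw [pd_congr h s,
    pd_sum_const_mul (g := fun t => pd2 t p Φ)
      (fun t => diffAt_pd hU (contDiffOn_pd hU hΦ t) p hu)
      (η k) (fun t => (1 / 2) * b t p) s]
  rfl

end Main

/-- For `H^i = η^{is}(∂Φ/∂u^s − (1/2) b_{sk} u^k)` with antisymmetric constants
`b_{sk}`, system (ass2) holds on `U` iff the potential `Φ` satisfies the equations
`(∂²Φ/∂u^i∂u^s − (K₁/2) η_{ir}η_{sl}u^ru^l) η^{sp} ∂³Φ/∂u^p∂u^j∂u^k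
 = (∂²Φ/∂u^j∂u^s − (K₁/2) η_{jr}η_{sl}u^ru^l) η^{sp} ∂³Φ/∂u^p∂u^i∂u^k` on `U`. -/
theorem stmt_14 {N : ℕ} (U : Set (Fin N → ℝ)) (hU : IsOpen U)
    (η : Matrix (Fin N) (Fin N) ℝ) (hηs : η.IsSymm) (hηi : IsUnit η.det)
    (K₁ : ℝ) (b : Fin N → Fin N → ℝ) (hb : ∀ s k, b s k = - b k s)
    (Φ : (Fin N → ℝ) → ℝ) (hΦ : ContDiffOn ℝ (⊤ : ℕ∞) Φ U)
    (H : Fin N → (Fin N → ℝ) → ℝ)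
    (hHdef : ∀ i u, H i u
        = ∑ s, η i s * (pd s Φ u - (1 / 2) * ∑ k, b s k * u k)) :
    (∀ u ∈ U, Ass2 η K₁ H u) ↔
    (∀ u ∈ U, ∀ i j k,
      ∑ s, ∑ p,
          (pd2 i s Φ u - K₁ / 2 * ∑ r, ∑ l, η⁻¹ i r * η⁻¹ s l * u r * u l)
            * η s p * pd3 p j k Φ u
        = ∑ s, ∑ p,
          (pd2 j s Φ u - K₁ / 2 * ∑ r, ∑ l, η⁻¹ j r * η⁻¹ s l * u r * u l)
            * η s p * pd3 p i k Φ u) := by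
  have hη2 : η * η⁻¹ = 1 := Matrix.mul_nonsing_inv η hηi
  have hη1 : η⁻¹ * η = 1 := Matrix.nonsing_inv_mul η hηi
  have hηe : ηᵀ = η := hηs
  have hsym : ∀ a c, η a c = η c a := fun a c => hηs.apply c a
  -- cancellation of η on both sides
  have hcancel : ∀ Z Z' : Matrix (Fin N) (Fin N) ℝ, η * Z * η = η * Z' * η → Z = Z' := by
    intro Z Z' hZ
    have e : ∀ Z : Matrix (Fin N) (Fin N) ℝ, η⁻¹ * (η * Z * η) * η⁻¹ = Z := by
      intro Z
      simp only [Matrix.mul_assoc, hη2, Matrix.mul_one]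
      rw [← Matrix.mul_assoc, hη1, Matrix.one_mul]
    rw [← e Z, hZ, e Z']
  refine forall₂_congr fun u hu => ?_
  set w : Fin N → ℝ := η⁻¹ *ᵥ u with hwdef
  set B : Matrix (Fin N) (Fin N) ℝ :=
    Matrix.of (fun a c => pd2 a c Φ u - K₁ / 2 * (w a * w c)) with hBdef
  set T : Fin N → Matrix (Fin N) (Fin N) ℝ :=
    (fun e => Matrix.of (fun p c => pd3 p c e Φ u)) with hTdef
  set Em : Fin N → Matrix (Fin N) (Fin N) ℝ :=
    (fun k => Matrix.of (fun s p => pd2 p s (H k) u)) with hEmdef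
  set Fm : Matrix (Fin N) (Fin N) ℝ :=
    Matrix.of (fun i s =>
      (∑ r, η i r * pd r (H s) u) + (∑ r, η s r * pd r (H i) u) - K₁ * u i * u s)
    with hFmdef
  have hC : ∀ a c, pd2 a c Φ u = pd2 c a Φ u := fun a c => pd2_symm hU hΦ hu a c
  have hpdH : ∀ i r, pd r (H i) u = ∑ t, η i t * (pd2 t r Φ u - (1 / 2) * b t r) :=
    fun i r => pd_H hU hΦ hu η b hHdef i r
  have hwi : ∀ i, w i = ∑ r, η⁻¹ i r * u r := fun i => rfl
  have hηw : η *ᵥ w = u := by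
    rw [hwdef, Matrix.mulVec_mulVec, hη2, Matrix.one_mulVec]
  have hui : ∀ i, (∑ r, η i r * w r) = u i := fun i => congrFun hηw i
  have hww : ∀ i s : Fin N,
      (∑ r, ∑ l, η⁻¹ i r * η⁻¹ s l * u r * u l) = w i * w s := by
    intro i s
    rw [hwi i, hwi s, Finset.sum_mul_sum]
    exact Finset.sum_congr rfl fun r _ => Finset.sum_congr rfl fun l _ => by ring
  -- symmetry of the matrices
  have hBs : Bᵀ = B := by
    ext a c
    simp only [Matrix.transpose_apply, hBdef, Matrix.of_apply]
    rw [hC c a]; ring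
  have hTs : ∀ e, (T e)ᵀ = T e := by
    intro e; ext p c
    simp only [Matrix.transpose_apply, hTdef, Matrix.of_apply]
    exact pd3_swap12 hU hΦ hu c p e
  have hEmMat : ∀ k, Em k = ∑ t, η k t • T t := by
    intro k; ext s p
    simp only [hEmdef, hTdef, Matrix.of_apply, Matrix.sum_apply, Matrix.smul_apply,
      smul_eq_mul]
    rw [pd2_H hU hΦ hu η b hHdef k p s]
    exact Finset.sum_congr rfl fun t _ => by rw [pd3_swap13 hU hΦ hu t p s]
  have hEmS : ∀ k, (Em k)ᵀ = Em k := by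
    intro k
    rw [hEmMat k, Matrix.transpose_sum]
    exact Finset.sum_congr rfl fun t _ => by rw [Matrix.transpose_smul, hTs t]
  have hTmat : ∀ e, T e = ∑ k, η⁻¹ e k • Em k := by
    intro e
    simp_rw [hEmMat, Finset.smul_sum, smul_smul]
    rw [Finset.sum_comm]
    have h1 : ∀ t, (∑ k, (η⁻¹ e k * η k t) • T t) = ((η⁻¹ * η) e t) • T t := by
      intro t; rw [← Finset.sum_smul, Matrix.mul_apply]
    simp_rw [h1, hη1, Matrix.one_apply, ite_smul, one_smul, zero_smul]
    simp
  -- Fm = 2 • (η * B * η)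
  have hF : Fm = (2 : ℝ) • (η * B * η) := by
    ext i s
    have e1 : (∑ r, η i r * pd r (H s) u)
        = ∑ r, ∑ t, η i r * η s t * (pd2 t r Φ u - (1 / 2) * b t r) := by
      refine Finset.sum_congr rfl fun r _ => ?_
      rw [hpdH s r, Finset.mul_sum]
      exact Finset.sum_congr rfl fun t _ => by ring
    have e2 : (∑ r, η s r * pd r (H i) u)
        = ∑ r, ∑ t, η i r * η s t * (pd2 r t Φ u - (1 / 2) * b r t) := by
      have e2a : (∑ r, η s r * pd r (H i) u)
          = ∑ r, ∑ t, η s r * η i t * (pd2 t r Φ u - (1 / 2) * b t r) := by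
        refine Finset.sum_congr rfl fun r _ => ?_
        rw [hpdH i r, Finset.mul_sum]
        exact Finset.sum_congr rfl fun t _ => by ring
      rw [e2a, Finset.sum_comm]
      exact Finset.sum_congr rfl fun t _ => Finset.sum_congr rfl fun r _ => by ring
    have e3 : (∑ r, η i r * pd r (H s) u) + (∑ r, η s r * pd r (H i) u)
        = ∑ r, ∑ t, η i r * η s t * (2 * pd2 r t Φ u) := by
      rw [e1, e2, ← Finset.sum_add_distrib]
      refine Finset.sum_congr rfl fun r _ => ?_
      rw [← Finset.sum_add_distrib]
      refine Finset.sum_congr rfl fun t _ => ?_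
      rw [hC t r, hb r t]; ring
    have e5 : (∑ r, ∑ t, (η i r * w r) * (η s t * w t)) = u i * u s := by
      rw [← Finset.sum_mul_sum, hui i, hui s]
    have e4 : ((2 : ℝ) • (η * B * η)) i s
        = (∑ r, ∑ t, η i r * η s t * (2 * pd2 r t Φ u)) - K₁ * u i * u s := by
      have h1 : (η * B * η) i s = ∑ r, ∑ t, η i r * B r t * η t s := by
        simp_rw [Matrix.mul_apply, Finset.sum_mul]
        rw [Finset.sum_comm]
      rw [Matrix.smul_apply, smul_eq_mul, h1, Finset.mul_sum]
      have h2 : ∀ r, 2 * (∑ t, η i r * B r t * η t s)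
          = ∑ t, (η i r * η s t * (2 * pd2 r t Φ u)
              - K₁ * ((η i r * w r) * (η s t * w t))) := by
        intro r
        rw [Finset.mul_sum]
        refine Finset.sum_congr rfl fun t _ => ?_
        rw [show B r t = pd2 r t Φ u - K₁ / 2 * (w r * w t) from rfl, hsym t s]
        ring
      simp_rw [h2]
      have hsplit : (∑ r, ∑ t, (η i r * η s t * (2 * pd2 r t Φ u)
            - K₁ * ((η i r * w r) * (η s t * w t))))
          = (∑ r, ∑ t, η i r * η s t * (2 * pd2 r t Φ u))
            - K₁ * (∑ r, ∑ t, (η i r * w r) * (η s t * w t)) := by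
        rw [Finset.mul_sum, ← Finset.sum_sub_distrib]
        refine Finset.sum_congr rfl fun r _ => ?_
        rw [Finset.mul_sum, ← Finset.sum_sub_distrib]
      rw [hsplit, e5]; ring
    show (∑ r, η i r * pd r (H s) u) + (∑ r, η s r * pd r (H i) u) - K₁ * u i * u s
        = ((2 : ℝ) • (η * B * η)) i s
    rw [e3, e4]
  -- entrywise identities
  have hAssEq : ∀ i j k,
      (∑ s, ∑ p,
        ((∑ r, η i r * pd r (H s) u) + (∑ r, η s r * pd r (H i) u) - K₁ * u i * u s)
          * η j p * pd2 p s (H k) u)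
      = (Fm * Em k * η) i j := by
    intro i j k
    have h1 : (Fm * Em k * η) i j = ∑ s, ∑ p, Fm i s * Em k s p * η p j := by
      simp_rw [Matrix.mul_apply, Finset.sum_mul]
      rw [Finset.sum_comm]
    rw [h1]
    refine Finset.sum_congr rfl fun s _ => Finset.sum_congr rfl fun p _ => ?_
    rw [show Fm i s = (∑ r, η i r * pd r (H s) u) + (∑ r, η s r * pd r (H i) u)
        - K₁ * u i * u s from rfl,
      show Em k s p = pd2 p s (H k) u from rfl, hsym p j]
    ring
  have hTargetEq : ∀ i j k,
      (∑ s, ∑ p,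
        (pd2 i s Φ u - K₁ / 2 * ∑ r, ∑ l, η⁻¹ i r * η⁻¹ s l * u r * u l)
          * η s p * pd3 p j k Φ u)
      = (B * η * T k) i j := by
    intro i j k
    have h1 : (B * η * T k) i j = ∑ s, ∑ p, B i s * η s p * T k p j := by
      simp_rw [Matrix.mul_apply, Finset.sum_mul]
      rw [Finset.sum_comm]
    rw [h1]
    refine Finset.sum_congr rfl fun s _ => Finset.sum_congr rfl fun p _ => ?_
    rw [hww i s]
    rfl
  -- the two matrix conditions
  have hiff : ∀ k, (Fm * Em k * η = (Fm * Em k * η)ᵀ)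
      ↔ (B * η * Em k = Em k * η * B) := by
    intro k
    have htr : (Fm * Em k * η)ᵀ = (2 : ℝ) • (η * (Em k * η * B) * η) := by
      rw [hF]
      simp only [Matrix.smul_mul, Matrix.transpose_smul, Matrix.transpose_mul,
        hηe, hBs, hEmS k, Matrix.mul_assoc]
    have hl : Fm * Em k * η = (2 : ℝ) • (η * (B * η * Em k) * η) := by
      rw [hF]
      simp only [Matrix.smul_mul, Matrix.mul_assoc]
    rw [htr, hl]
    constructor
    · intro h
      have := smul_right_injective (Matrix (Fin N) (Fin N) ℝ)
        (two_ne_zero (α := ℝ)) h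
      exact hcancel _ _ this
    · intro h; rw [h]
  have hTiff : ∀ k, (B * η * T k = (B * η * T k)ᵀ)
      ↔ (B * η * T k = T k * η * B) := by
    intro k
    have : (B * η * T k)ᵀ = T k * η * B := by
      simp only [Matrix.transpose_mul, hηe, hBs, hTs k, Matrix.mul_assoc]
    rw [this]
  have hstep3 : (∀ k, B * η * Em k = Em k * η * B)
      ↔ (∀ e, B * η * T e = T e * η * B) := by
    constructor
    · intro h e
      rw [hTmat e]
      calc B * η * (∑ k, η⁻¹ e k • Em k)
          = ∑ k, η⁻¹ e k • (B * η * Em k) := by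
            rw [Matrix.mul_sum]
            exact Finset.sum_congr rfl fun k _ => by rw [Matrix.mul_smul]
        _ = ∑ k, η⁻¹ e k • (Em k * η * B) := by simp_rw [h]
        _ = (∑ k, η⁻¹ e k • Em k) * η * B := by
            rw [Matrix.sum_mul, Matrix.sum_mul]
            exact Finset.sum_congr rfl fun k _ => by
              rw [Matrix.smul_mul, Matrix.smul_mul]
    · intro h k
      rw [hEmMat k]
      calc B * η * (∑ t, η k t • T t)
          = ∑ t, η k t • (B * η * T t) := by
            rw [Matrix.mul_sum]
            exact Finset.sum_congr rfl fun t _ => by rw [Matrix.mul_smul]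
        _ = ∑ t, η k t • (T t * η * B) := by simp_rw [h]
        _ = (∑ t, η k t • T t) * η * B := by
            rw [Matrix.sum_mul, Matrix.sum_mul]
            exact Finset.sum_congr rfl fun t _ => by
              rw [Matrix.smul_mul, Matrix.smul_mul]
  -- final assembly
  unfold Ass2
  constructor
  · intro hA i j k
    have hk : ∀ k, B * η * Em k = Em k * η * B := by
      intro k'
      rw [← hiff k']
      ext i' j'
      rw [Matrix.transpose_apply, ← hAssEq i' j' k', ← hAssEq j' i' k']
      exact hA i' j' k'
    have hT2 : B * η * T k = T k * η * B := hstep3.mp hk k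
    rw [hTargetEq i j k, hTargetEq j i k]
    have h5 : B * η * T k = (B * η * T k)ᵀ := (hTiff k).mpr hT2
    conv_lhs => rw [h5, Matrix.transpose_apply]
  · intro hT i j k
    have hTk : ∀ e, B * η * T e = T e * η * B := by
      intro e
      rw [← hTiff e]
      ext i' j'
      rw [Matrix.transpose_apply, ← hTargetEq i' j' e, ← hTargetEq j' i' e]
      exact hT i' j' e
    have hk : B * η * Em k = Em k * η * B := hstep3.mpr hTk k
    rw [hAssEq i j k, hAssEq j i k]
    have h5 : Fm * Em k * η = (Fm * Em k * η)ᵀ := (hiff k).mpr hk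
    conv_lhs => rw [h5, Matrix.transpose_apply]
end

section
/- Let U ⊆ ℝ^N be open, η^{ij} a constant symmetric invertible real N×N matrix, K₁ ∈ ℝ, and let H^1,…,H^N : U → ℝ be smooth functions satisfying systems (ass1) and (ass2) at every point of U together with the commutativity condition Σ_s η^{is} ∂²H^j/∂u^s∂u^k = Σ_s η^{js} ∂²H^i/∂u^s∂u^k on U. Then for every u ∈ U the algebra A(u) with basis e^1,…,e^N, multiplication e^i ∘ e^j = Σ_{s,k} η^{is} (∂²H^j/∂u^s∂u^k)(u) e^k, and symmetric bilinear form ⟨e^i, e^j⟩ = Σ_s η^{is} (∂H^j/∂u^s)(u) + Σ_s η^{js} (∂H^i/∂u^s)(u) − K₁ u^i u^j is a Frobenius algebra: the multiplication is commutative and associative, and ⟨x ∘ y, z⟩ = ⟨x, y ∘ z⟩ for all x, y, z in A(u). -/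
/-- System (ass1) at the point `u`. -/
noncomputable def Ass1 {N : ℕ} (η : Matrix (Fin N) (Fin N) ℝ)
    (H : Fin N → (Fin N → ℝ) → ℝ) (u : Fin N → ℝ) : Prop :=
  ∀ i j k l, ∑ s, ∑ p, pd2 k s (H i) u * η s p * pd2 p l (H j) u
    = ∑ s, ∑ p, pd2 k s (H j) u * η s p * pd2 p l (H i) u

section Aux

lemma perm4 {N : ℕ} (f : Fin N → Fin N → Fin N → Fin N → ℝ) :
    ∑ m : Fin N, ∑ l, ∑ i, ∑ j, f m l i j = ∑ i, ∑ j, ∑ l, ∑ m, f m l i j := by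
  refine (Finset.sum_comm).trans ?_
  refine (Finset.sum_congr rfl fun l _ => Finset.sum_comm).trans ?_
  refine (Finset.sum_congr rfl fun l _ => Finset.sum_congr rfl fun i _ =>
    Finset.sum_comm).trans ?_
  refine (Finset.sum_comm).trans ?_
  exact Finset.sum_congr rfl fun i _ => Finset.sum_comm

lemma perm3 {N : ℕ} (f : Fin N → Fin N → Fin N → ℝ) :
    ∑ a : Fin N, ∑ b, ∑ c, f a b c = ∑ b, ∑ c, ∑ a, f a b c := by
  refine (Finset.sum_comm).trans ?_
  exact Finset.sum_congr rfl fun b _ => Finset.sum_comm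

/-- The main trilinear rearrangement: from `(x∘y)∘z`-shape to `x∘(y∘z)`-shape. -/
lemma trilinear {N : ℕ} (x y z : Fin N → ℝ) (P R : Fin N → Fin N → Fin N → ℝ)
    (Q S : Fin N → Fin N → ℝ)
    (h : ∀ i j l, ∑ m, P i j m * Q m l = ∑ m, R j l m * S i m) :
    ∑ m, ∑ l, (∑ i, ∑ j, x i * y j * P i j m) * z l * Q m l
      = ∑ i, ∑ m, x i * (∑ j, ∑ l, y j * z l * R j l m) * S i m := by
  calc ∑ m, ∑ l, (∑ i, ∑ j, x i * y j * P i j m) * z l * Q m l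
      = ∑ m, ∑ l, ∑ i, ∑ j, x i * y j * z l * (P i j m * Q m l) := by
        refine Finset.sum_congr rfl fun m _ => Finset.sum_congr rfl fun l _ => ?_
        simp only [Finset.sum_mul]
        exact Finset.sum_congr rfl fun i _ => Finset.sum_congr rfl fun j _ => by ring
    _ = ∑ i, ∑ j, ∑ l, ∑ m, x i * y j * z l * (P i j m * Q m l) := perm4 _
    _ = ∑ i, ∑ j, ∑ l, ∑ m, x i * y j * z l * (R j l m * S i m) := by
        refine Finset.sum_congr rfl fun i _ => Finset.sum_congr rfl fun j _ =>
          Finset.sum_congr rfl fun l _ => ?_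
        rw [← Finset.mul_sum, ← Finset.mul_sum, h i j l]
    _ = ∑ i, ∑ m, ∑ j, ∑ l, x i * y j * z l * (R j l m * S i m) := by
        exact Finset.sum_congr rfl fun i _ =>
          (perm3 (fun m j l => x i * y j * z l * (R j l m * S i m))).symm
    _ = ∑ i, ∑ m, x i * (∑ j, ∑ l, y j * z l * R j l m) * S i m := by
        refine Finset.sum_congr rfl fun i _ => Finset.sum_congr rfl fun m _ => ?_
        symm
        simp only [Finset.mul_sum, Finset.sum_mul]
        exact Finset.sum_congr rfl fun j _ => Finset.sum_congr rfl fun l _ => by ring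

variable {N : ℕ} (η : Matrix (Fin N) (Fin N) ℝ) (K₁ : ℝ)
  (H : Fin N → (Fin N → ℝ) → ℝ) (u : Fin N → ℝ)

/-- Structure constants of the multiplication. -/
noncomputable def cc (i j k : Fin N) : ℝ := ∑ s, η i s * pd2 s k (H j) u

/-- The bilinear form on basis vectors. -/
noncomputable def gg (i j : Fin N) : ℝ :=
  (∑ s, η i s * pd s (H j) u) + (∑ s, η j s * pd s (H i) u) - K₁ * u i * u j

variable {η K₁ H u}

lemma gg_symm (i j : Fin N) : gg η K₁ H u i j = gg η K₁ H u j i := by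
  unfold gg; ring

lemma key1 (hass1 : Ass1 η H u)
    (hc : ∀ i j k, cc η H u i j k = cc η H u j i k) (i j l k : Fin N) :
    ∑ m, cc η H u i j m * cc η H u m l k = ∑ m, cc η H u j l m * cc η H u i m k := by
  have step : ∀ a b : Fin N,
      ∑ m, cc η H u j a m * cc η H u m b k = ∑ s, η j s *
        (∑ m, ∑ p, pd2 s m (H a) u * η m p * pd2 p k (H b) u) := by
    intro a b
    calc ∑ m, cc η H u j a m * cc η H u m b k
        = ∑ m, ∑ s, ∑ p, η j s * (pd2 s m (H a) u * η m p * pd2 p k (H b) u) := by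
          refine Finset.sum_congr rfl fun m _ => ?_
          unfold cc
          rw [Finset.sum_mul]
          refine Finset.sum_congr rfl fun s _ => ?_
          rw [Finset.mul_sum]
          exact Finset.sum_congr rfl fun p _ => by ring
      _ = ∑ s, ∑ m, ∑ p, η j s * (pd2 s m (H a) u * η m p * pd2 p k (H b) u) :=
          Finset.sum_comm
      _ = ∑ s, η j s * (∑ m, ∑ p, pd2 s m (H a) u * η m p * pd2 p k (H b) u) := by
          refine Finset.sum_congr rfl fun s _ => ?_
          rw [Finset.mul_sum]
          exact Finset.sum_congr rfl fun m _ => (Finset.mul_sum _ _ _).symm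
  calc ∑ m, cc η H u i j m * cc η H u m l k
      = ∑ m, cc η H u j i m * cc η H u m l k :=
        Finset.sum_congr rfl fun m _ => by rw [hc i j m]
    _ = ∑ s, η j s * (∑ m, ∑ p, pd2 s m (H i) u * η m p * pd2 p k (H l) u) := step i l
    _ = ∑ s, η j s * (∑ m, ∑ p, pd2 s m (H l) u * η m p * pd2 p k (H i) u) :=
        Finset.sum_congr rfl fun s _ => by rw [hass1 i l s k]
    _ = ∑ m, cc η H u j l m * cc η H u m i k := (step l i).symm
    _ = ∑ m, cc η H u j l m * cc η H u i m k :=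
        Finset.sum_congr rfl fun m _ => by rw [hc m i k]

lemma key2 (hass2 : Ass2 η K₁ H u)
    (hc : ∀ i j k, cc η H u i j k = cc η H u j i k) (i j l : Fin N) :
    ∑ m, cc η H u i j m * gg η K₁ H u m l
      = ∑ m, cc η H u j l m * gg η K₁ H u i m := by
  have step : ∀ a b c : Fin N,
      ∑ s, ∑ p, gg η K₁ H u a s * η b p * pd2 p s (H c) u
        = ∑ m, cc η H u b c m * gg η K₁ H u a m := by
    intro a b c
    refine Finset.sum_congr rfl fun m _ => ?_
    unfold cc
    rw [Finset.sum_mul]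
    refine Finset.sum_congr rfl fun p _ => ?_
    ring
  calc ∑ m, cc η H u i j m * gg η K₁ H u m l
      = ∑ m, cc η H u i j m * gg η K₁ H u l m :=
        Finset.sum_congr rfl fun m _ => by rw [gg_symm m l]
    _ = ∑ s, ∑ p, gg η K₁ H u l s * η i p * pd2 p s (H j) u := (step l i j).symm
    _ = ∑ s, ∑ p, gg η K₁ H u i s * η l p * pd2 p s (H j) u := hass2 l i j
    _ = ∑ m, cc η H u l j m * gg η K₁ H u i m := step i l j
    _ = ∑ m, cc η H u j l m * gg η K₁ H u i m :=
        Finset.sum_congr rfl fun m _ => by rw [hc l j m]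

end Aux

/-- If the functions `H^i` satisfy systems (ass1) and (ass2) on `U` together with
the commutativity condition, then for every `u ∈ U` the algebra `A(u)` with
multiplication `e^i ∘ e^j = η^{is}(∂²H^j/∂u^s∂u^k)(u) e^k` and bilinear form
`⟨e^i, e^j⟩ = η^{is}(∂H^j/∂u^s)(u) + η^{js}(∂H^i/∂u^s)(u) − K₁u^iu^j` is a
Frobenius algebra: commutative, associative, and `⟨x∘y, z⟩ = ⟨x, y∘z⟩`. -/
theorem stmt_15 {N : ℕ} (U : Set (Fin N → ℝ)) (hU : IsOpen U)
    (η : Matrix (Fin N) (Fin N) ℝ) (hηs : η.IsSymm) (hηi : IsUnit η.det)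
    (K₁ : ℝ) (H : Fin N → (Fin N → ℝ) → ℝ)
    (hH : ∀ i, ContDiffOn ℝ (⊤ : ℕ∞) (H i) U)
    (hass : ∀ u ∈ U, Ass1 η H u ∧ Ass2 η K₁ H u)
    (hcomm : ∀ u ∈ U, ∀ i j k,
        ∑ s, η i s * pd2 s k (H j) u = ∑ s, η j s * pd2 s k (H i) u)
    (u : Fin N → ℝ) (hu : u ∈ U)
    (mul : (Fin N → ℝ) → (Fin N → ℝ) → (Fin N → ℝ))
    (hmul : ∀ x y : Fin N → ℝ, ∀ k,
        mul x y k = ∑ i, ∑ j, x i * y j * (∑ s, η i s * pd2 s k (H j) u))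
    (B : (Fin N → ℝ) → (Fin N → ℝ) → ℝ)
    (hB : ∀ x y, B x y = ∑ i, ∑ j, x i * y j
        * ((∑ s, η i s * pd s (H j) u) + (∑ s, η j s * pd s (H i) u)
            - K₁ * u i * u j)) :
    (∀ x y, mul x y = mul y x) ∧
    (∀ x y z, mul (mul x y) z = mul x (mul y z)) ∧
    (∀ x y z, B (mul x y) z = B x (mul y z)) := by
  obtain ⟨ha1, ha2⟩ := hass u hu
  have hc : ∀ i j k, cc η H u i j k = cc η H u j i k := fun i j k => hcomm u hu i j k
  have hmul' : ∀ x y : Fin N → ℝ, ∀ k,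
      mul x y k = ∑ i, ∑ j, x i * y j * cc η H u i j k := hmul
  have hB' : ∀ x y, B x y = ∑ i, ∑ j, x i * y j * gg η K₁ H u i j := hB
  refine ⟨?_, ?_, ?_⟩
  · intro x y
    funext k
    rw [hmul' x y k, hmul' y x k, Finset.sum_comm]
    refine Finset.sum_congr rfl fun a _ => Finset.sum_congr rfl fun b _ => ?_
    rw [hc b a k]; ring
  · intro x y z
    funext k
    calc mul (mul x y) z k
        = ∑ m, ∑ l, (∑ i, ∑ j, x i * y j * cc η H u i j m) * z l * cc η H u m l k := by
          rw [hmul' (mul x y) z k]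
          exact Finset.sum_congr rfl fun m _ => Finset.sum_congr rfl fun l _ => by
            rw [hmul' x y m]
      _ = ∑ i, ∑ m, x i * (∑ j, ∑ l, y j * z l * cc η H u j l m) * cc η H u i m k :=
          trilinear x y z (cc η H u) (cc η H u) (fun m l => cc η H u m l k)
            (fun i m => cc η H u i m k) (fun i j l => key1 ha1 hc i j l k)
      _ = mul x (mul y z) k := by
          rw [hmul' x (mul y z) k]
          exact Finset.sum_congr rfl fun i _ => Finset.sum_congr rfl fun m _ => by
            rw [hmul' y z m]
  · intro x y z
    calc B (mul x y) z
        = ∑ m, ∑ l, (∑ i, ∑ j, x i * y j * cc η H u i j m) * z l * gg η K₁ H u m l := by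
          rw [hB' (mul x y) z]
          exact Finset.sum_congr rfl fun m _ => Finset.sum_congr rfl fun l _ => by
            rw [hmul' x y m]
      _ = ∑ i, ∑ m, x i * (∑ j, ∑ l, y j * z l * cc η H u j l m) * gg η K₁ H u i m :=
          trilinear x y z (cc η H u) (cc η H u) (gg η K₁ H u) (gg η K₁ H u)
            (key2 ha2 hc)
      _ = B x (mul y z) := by
          rw [hB' x (mul y z)]
          exact Finset.sum_congr rfl fun i _ => Finset.sum_congr rfl fun m _ => by
            rw [hmul' y z m]
end
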